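/- Let G = (V, E, Γ) be a connected directed multigraph without self-loops satisfying Δ⁻(v) = Δ⁺(v) for every v ∈ V, let F ⊆ E be a set of priority edges with at most one edge of F outgoing from each node, Γ(f) = 1 for every f ∈ F, and such that every node with an outgoing priority edge has another outgoing edge. Let r ∈ V, and suppose H is an r-oriented spanning tree of (V, E ∖ F). Then any maximal trail starting at r that (i) at each node follows the unused priority edge whenever the current node has one, and (ii) follows an edge of H only when it is the only remaining unused outgoing choice, traverses every edge e exactly Γ(e) times and ends at r; that is, it is an r-Eulerian cycle of G respecting F. -/
import Mathlib


open scoped Classical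

/-- `l` is the list of successive nodes (after the start) of a directed path
from `a` to `b` in the graph whose edge relation is `E`. -/
def IsPathOn {V : Type*} (E : V → V → Prop) : List V → V → V → Prop
  | [], a, b => a = b
  | x :: l, a, b => E a x ∧ IsPathOn E l x b

/-- A walk through arcs `(tail, head)` from `a` to `b`. -/
def PairWalk {V : Type*} : List (V × V) → V → V → Prop
  | [], a, b => a = b
  | e :: p, a, b => e.1 = a ∧ PairWalk p e.2 b

/-- `p` is a trail from `r` to `v` in the multigraph with multiplicities `Γ`
(each edge `e` is traversed at most `Γ e` times) obeying the two greedy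
rules: (i) at each node, if the priority edge (of `F`) out of the current
node is still unused, it must be followed; (ii) an edge of the oriented
spanning tree `H` may be followed only when every other outgoing edge of the
current node is already exhausted. -/
def GreedyTrail {V : Type*} [DecidableEq V] (Γ : V → V → ℕ)
    (F : Finset (V × V)) (H : V → V → Prop) (r : V)
    (p : List (V × V)) (v : V) : Prop :=
  PairWalk p r v ∧
  (∀ e : V × V, p.count e ≤ Γ e.1 e.2) ∧
  (∀ pre e post, p = pre ++ e :: post →
    (∀ w, (e.1, w) ∈ F → (e.1, w) ∉ pre → e.2 = w) ∧
    (H e.1 e.2 → ∀ w, w ≠ e.2 → Γ e.1 w ≤ pre.count (e.1, w)))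


lemma pairWalk_append {V : Type*} {p q : List (V × V)} {a b c : V}
    (hp : PairWalk p a b) (hq : PairWalk q b c) : PairWalk (p ++ q) a c := by
  induction p generalizing a with
  | nil => obtain rfl : a = b := hp; simpa using hq
  | cons e p ih => exact ⟨hp.1, ih hp.2⟩

lemma snoc_eq_append {α : Type*} {p pre post : List α} {x e : α}
    (h : p ++ [x] = pre ++ e :: post) :
    (pre = p ∧ e = x ∧ post = []) ∨ ∃ post', post = post' ++ [x] ∧ p = pre ++ e :: post' := by
  rcases List.eq_nil_or_concat post with rfl | ⟨post', y, rfl⟩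
  · left
    have h2 := List.append_inj' h rfl
    exact ⟨h2.1.symm, (List.cons.injEq .. ▸ h2.2).1.symm, rfl⟩
  · right
    refine ⟨post', ?_, ?_⟩
    · have h2 := List.append_inj' (by simpa using h : p ++ [x] = (pre ++ e :: post') ++ [y]) rfl
      simp [h2.2]
    · have h2 := List.append_inj' (by simpa using h : p ++ [x] = (pre ++ e :: post') ++ [y]) rfl
      exact h2.1

lemma sum_count_cons_left {V : Type*} [Fintype V] [DecidableEq V] (e : V × V)
    (q : List (V × V)) (u : V) :
    (∑ w, (e :: q).count (u, w)) = (∑ w, q.count (u, w)) + (if u = e.1 then 1 else 0) := by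
  simp only [List.count_cons, beq_iff_eq, Finset.sum_add_distrib]
  congr 1
  rcases e with ⟨a, b⟩
  simp only [Prod.mk.injEq]
  by_cases h : u = a
  · simp [h]
  · simp [h, fun x => show ¬(a = u ∧ b = x) from fun hh => h hh.1.symm]

lemma sum_count_cons_right {V : Type*} [Fintype V] [DecidableEq V] (e : V × V)
    (q : List (V × V)) (u : V) :
    (∑ w, (e :: q).count (w, u)) = (∑ w, q.count (w, u)) + (if u = e.2 then 1 else 0) := by
  simp only [List.count_cons, beq_iff_eq, Finset.sum_add_distrib]
  congr 1
  rcases e with ⟨a, b⟩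
  simp only [Prod.mk.injEq]
  by_cases h : u = b
  · simp [h, eq_comm]
  · simp [h, fun x => show ¬(a = x ∧ b = u) from fun hh => h hh.2.symm]

lemma pairWalk_count {V : Type*} [Fintype V] [DecidableEq V] {p : List (V × V)} {a b : V}
    (h : PairWalk p a b) (u : V) :
    (∑ w, p.count (u, w)) + (if u = b then 1 else 0)
      = (∑ w, p.count (w, u)) + (if u = a then 1 else 0) := by
  induction p generalizing a with
  | nil => obtain rfl : a = b := h; simp
  | cons e q ih =>
    obtain ⟨he, hq⟩ := h
    have := ih hq
    rw [sum_count_cons_left, sum_count_cons_right, he]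
    omega

lemma hsucc_unique {V : Type*} {H : V → V → Prop} {r : V}
    (hHtree : ∀ v : V, ∃! l : List V, IsPathOn H l v r)
    {u t t' : V} (h1 : H u t) (h2 : H u t') : t = t' := by
  obtain ⟨lt, hlt, -⟩ := hHtree t
  obtain ⟨lt', hlt', -⟩ := hHtree t'
  obtain ⟨lu, -, huniq⟩ := hHtree u
  have e1 := huniq (t :: lt) ⟨h1, hlt⟩
  have e2 := huniq (t' :: lt') ⟨h2, hlt'⟩
  have h3 := e1.trans e2.symm
  exact (List.cons.injEq .. ▸ h3).1

lemma extend_greedy {V : Type*} [Fintype V] [DecidableEq V]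
    {Γ : V → V → ℕ} {F : Finset (V × V)} {H : V → V → Prop} {r : V}
    (hFE : ∀ e ∈ F, 0 < Γ e.1 e.2)
    (hFone : ∀ u v w : V, (u, v) ∈ F → (u, w) ∈ F → v = w)
    (hHsub : ∀ u v, H u v → 0 < Γ u v ∧ (u, v) ∉ F)
    (hHtree : ∀ v : V, ∃! l : List V, IsPathOn H l v r)
    {p : List (V × V)} {v : V} (hp : GreedyTrail Γ F H r p v)
    {w0 : V} (hw0 : p.count (v, w0) < Γ v w0) :
    ∃ w, GreedyTrail Γ F H r (p ++ [(v, w)]) w := by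
  obtain ⟨hwalk, hcnt, hgr⟩ := hp
  have key : ∃ w, p.count (v, w) < Γ v w ∧
      (∀ w', (v, w') ∈ F → (v, w') ∉ p → w = w') ∧
      (H v w → ∀ w', w' ≠ w → Γ v w' ≤ p.count (v, w')) := by
    by_cases h1 : ∃ w', (v, w') ∈ F ∧ (v, w') ∉ p
    · obtain ⟨w, hwF, hwnp⟩ := h1
      refine ⟨w, ?_, ?_, ?_⟩
      · rw [List.count_eq_zero.mpr hwnp]; exact hFE (v, w) hwF
      · intro w' hF _; exact hFone v w w' hwF hF
      · intro hH; exact absurd hwF (hHsub v w hH).2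
    · by_cases h2 : ∃ w', p.count (v, w') < Γ v w' ∧ ¬ H v w'
      · obtain ⟨w, hc, hnH⟩ := h2
        exact ⟨w, hc, fun w' hF hn => (h1 ⟨w', hF, hn⟩).elim, fun hH => (hnH hH).elim⟩
      · have hH0 : H v w0 := by by_contra hn; exact h2 ⟨w0, hw0, hn⟩
        refine ⟨w0, hw0, fun w' hF hn => (h1 ⟨w', hF, hn⟩).elim, fun _ w' hne => ?_⟩
        by_contra hlt
        push_neg at hlt
        have hHw' : H v w' := by by_contra hn; exact h2 ⟨w', hlt, hn⟩
        exact hne (hsucc_unique hHtree hHw' hH0)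
  obtain ⟨w, hcw, hpri, htree⟩ := key
  refine ⟨w, pairWalk_append hwalk ⟨rfl, rfl⟩, ?_, ?_⟩
  · intro e
    rw [List.count_append]
    by_cases he : e = (v, w)
    · subst he; simpa using hcw
    · have h0 : List.count e [(v, w)] = 0 := List.count_eq_zero.mpr (by simp [he])
      rw [h0]
      simpa using hcnt e
  · intro pre e post heq
    rcases snoc_eq_append heq with ⟨rfl, rfl, rfl⟩ | ⟨post', rfl, hpe⟩
    · exact ⟨fun w' hF hn => hpri w' hF hn, fun hH w' hne => htree hH w' hne⟩
    · exact hgr pre e post' hpe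

/-- Let `G = (V, E, Γ)` be a connected directed multigraph
without self-loops with `Δ⁻(v) = Δ⁺(v)` for all `v`, let `F ⊆ E` be a set of
priority edges, at most one outgoing from each node, each of multiplicity 1,
such that every node with an outgoing priority edge has another outgoing
edge. Let `H` be an `r`-oriented spanning tree of `(V, E ∖ F)`. Then any
maximal greedy trail `p` starting at `r` traverses every edge `e` exactly
`Γ(e)` times and ends at `r`; that is, it is an `r`-Eulerian cycle of `G`
respecting `F`. -/
theorem statement16 {V : Type*} [Fintype V] [DecidableEq V]
    (Γ : V → V → ℕ) (r : V)
    (hloop : ∀ v, Γ v v = 0)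
    (hconn : ∀ u v : V, ∃ l : List V,
      IsPathOn (fun a b => 0 < Γ a b ∨ 0 < Γ b a) l u v)
    (hbal : ∀ v : V, ∑ u, Γ u v = ∑ w, Γ v w)
    (F : Finset (V × V))
    (hFE : ∀ e ∈ F, 0 < Γ e.1 e.2)
    (hFone : ∀ u v w : V, (u, v) ∈ F → (u, w) ∈ F → v = w)
    (hFmult : ∀ e ∈ F, Γ e.1 e.2 = 1)
    (hFother : ∀ u v : V, (u, v) ∈ F → ∃ w, w ≠ v ∧ 0 < Γ u w)
    (H : V → V → Prop)
    (hHsub : ∀ u v, H u v → 0 < Γ u v ∧ (u, v) ∉ F)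
    (hHtree : ∀ v : V, ∃! l : List V, IsPathOn H l v r)
    (p : List (V × V)) (v : V)
    (hp : GreedyTrail Γ F H r p v)
    (hmax : ∀ w : V, ¬ GreedyTrail Γ F H r (p ++ [(v, w)]) w) :
    v = r ∧
    (∀ u w : V, p.count (u, w) = Γ u w) ∧
    (∀ pre e post, p = pre ++ e :: post →
      ∀ w, (e.1, w) ∈ F → e.2 ≠ w → (e.1, w) ∈ pre) := by
  have hext : ∀ w, Γ v w ≤ p.count (v, w) := by
    by_contra hcon
    push_neg at hcon
    obtain ⟨w0, hw0⟩ := hcon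
    obtain ⟨w, hw⟩ := extend_greedy hFE hFone hHsub hHtree hp hw0
    exact hmax w hw
  have hvr : v = r := by
    have hA := pairWalk_count hp.1 v
    have h1 : ∑ w, Γ v w ≤ ∑ w, p.count (v, w) := Finset.sum_le_sum (fun w _ => hext w)
    have h2 : ∑ w, p.count (w, v) ≤ ∑ w, Γ w v := Finset.sum_le_sum (fun w _ => hp.2.1 (w, v))
    have h3 := hbal v
    by_contra hne
    rw [if_pos rfl, if_neg hne] at hA
    omega
  subst v
  have key : ∀ n (u : V) (l : List V), IsPathOn H l u r → l.length = n →
      ∀ w, Γ u w ≤ p.count (u, w) := by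
    intro n
    induction n with
    | zero =>
      intro u l hl hlen
      obtain rfl : l = [] := List.length_eq_zero_iff.mp hlen
      obtain rfl : u = r := hl
      exact hext
    | succ n ih =>
      intro u l hl hlen w
      rcases l with _ | ⟨t, l'⟩
      · simp at hlen
      obtain ⟨hHt, hl'⟩ := hl
      by_contra hltw
      push_neg at hltw
      have hunused : p.count (u, t) < Γ u t := by
        by_contra hge
        push_neg at hge
        have hpos : 0 < p.count (u, t) := lt_of_lt_of_le (hHsub u t hHt).1 hge
        obtain ⟨pre, post, hsplit⟩ := List.append_of_mem (List.count_pos_iff.mp hpos)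
        have h4 := (hp.2.2 pre (u, t) post hsplit).2 hHt
        by_cases hwt : w = t
        · subst hwt; omega
        · have h5 : Γ u w ≤ pre.count (u, w) := h4 w hwt
          have hmono : pre.count (u, w) ≤ p.count (u, w) := by
            rw [hsplit, List.count_append]; omega
          omega
      have hin : (∑ x, p.count (x, t)) < ∑ x, Γ x t :=
        Finset.sum_lt_sum (fun i _ => hp.2.1 (i, t)) ⟨u, Finset.mem_univ u, hunused⟩
      have hA := pairWalk_count hp.1 t
      have hout := Nat.add_right_cancel hA
      have hlen' : l'.length = n := by simpa using hlen
      have hIH : ∑ x, Γ t x ≤ ∑ x, p.count (t, x) :=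
        Finset.sum_le_sum (fun x _ => ih t l' hl' hlen' x)
      have hb := hbal t
      omega
  refine ⟨rfl, ?_, ?_⟩
  · intro u w
    obtain ⟨l, hl, -⟩ := hHtree u
    exact le_antisymm (hp.2.1 (u, w)) (key l.length u l hl rfl w)
  · intro pre e post heq w hF hne
    by_contra hnp
    exact hne ((hp.2.2 pre e post heq).1 w hF hnp)
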